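/- arXiv:2508.16796 — 6 statements merged into one kernel-verified Lean document; each statement's English description precedes it below -/
import Mathlib

section
/- The Hessian determinant of a homogeneous polynomial f vanishes identically if and only if the partial derivatives ∂f/∂x_0, ..., ∂f/∂x_N are algebraically dependent over the base field. -/
/-!
The Hessian matrix of `f` is the Jacobian matrix of its gradient, so this is the Jacobian
criterion for `n` polynomials `g` in `n` variables. The chain rule turns a relation `P(g) = 0` into
the linear relation `J_g · (∇P)(g) = 0`, and taking `P` of least total degree makes `(∇P)(g)`
nonzero (a nonzero partial of `P` has smaller degree, so it is not a relation). This gives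
`det J_g = 0` when `g` is dependent. Conversely, if `g` is independent, then for each `i` the
`n + 1` polynomials `g, xᵢ` are dependent (transcendence degree `n`), and the chain rule applied to
a least-degree relation `P(g, xᵢ) = 0` puts `c • eᵢ` into the column space of `J_g` with
`c = (∂P/∂xᵢ)(g, xᵢ) ≠ 0`, since `∂P/∂xᵢ = 0` would make `P` a relation among the `g` alone.
So `J_g · A` is diagonal with nonzero entries for some matrix `A`, and `det J_g ≠ 0`.
-/

open MvPolynomial Matrix

theorem Matrix.det_ne_zero_of_forall_mulVec_eq_single {n A : Type*} [Fintype n] [DecidableEq n]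
    [CommRing A] [IsDomain A] {M : Matrix n n A}
    (h : ∀ i, ∃ v c, c ≠ 0 ∧ M *ᵥ v = Pi.single i c) : M.det ≠ 0 := by
  choose v c hc hv using h
  have hdiag : M * of (fun j i => v i j) = diagonal c := by
    ext k i
    have hvk := congrFun (hv i) k
    rcases eq_or_ne k i with rfl | hki
    · simpa [mul_apply, mulVec, dotProduct] using hvk
    · simpa [mul_apply, mulVec, dotProduct, hki] using hvk
  intro h0
  have hdet := congrArg det hdiag
  rw [det_mul, h0, zero_mul, det_diagonal, eq_comm] at hdet
  exact Finset.prod_ne_zero_iff.mpr (fun i _ => hc i) hdet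

namespace MvPolynomial

section CommSemiring

variable {R σ ι : Type*} [CommSemiring R]

theorem pderiv_aeval [Fintype ι] (y : ι → MvPolynomial σ R) (P : MvPolynomial ι R) (k : σ) :
    pderiv k (aeval y P) = ∑ j, pderiv k (y j) * aeval y (pderiv j P) := by
  classical
  induction P using MvPolynomial.induction_on with
  | C a => simp
  | add p q hp hq => simp only [map_add, hp, hq, mul_add, Finset.sum_add_distrib]
  | mul_X p j h =>
    simp only [map_mul, aeval_X, Derivation.leibniz, pderiv_X, h, smul_eq_mul, map_add,
      Pi.single_apply, mul_add, Finset.sum_add_distrib, Finset.mul_sum]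
    simp [mul_left_comm, mul_comm]

theorem totalDegree_pderiv_lt {P : MvPolynomial σ R} {j : σ} (h : pderiv j P ≠ 0) :
    (pderiv j P).totalDegree < P.totalDegree := by
  have hdeg : ∀ m ∈ (pderiv j P).support, (m.sum fun _ e => e) < P.totalDegree := by
    intro m hm
    rw [mem_support_iff, coeff_pderiv] at hm
    have hle := le_totalDegree (mem_support_iff.mpr (left_ne_zero_of_mul hm))
    rw [Finsupp.sum_add_index' (fun _ => rfl) (fun _ _ _ => rfl),
      Finsupp.sum_single_index rfl] at hle
    omega
  obtain ⟨m, hm⟩ := support_nonempty.mpr h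
  exact (Finset.sup_lt_iff ((Nat.zero_le _).trans_lt (hdeg m hm))).mpr hdeg

noncomputable def jacobian (g : ι → MvPolynomial σ R) : Matrix σ ι (MvPolynomial σ R) :=
  of fun i j => pderiv i (g j)

theorem jacobian_mulVec_aeval_pderiv [Fintype ι] (y : ι → MvPolynomial σ R)
    (P : MvPolynomial ι R) :
    jacobian y *ᵥ (fun j => aeval y (pderiv j P)) = fun k => pderiv k (aeval y P) := by
  funext k
  exact (pderiv_aeval y P k).symm

end CommSemiring

variable {R σ ι : Type*} [CommRing R]

theorem exists_annihilator_aeval_pderiv_ne_zero {A : Type*} [CommRing A] [Algebra R A]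
    {y : ι → A} (hy : ¬ AlgebraicIndependent R y) :
    ∃ P : MvPolynomial ι R, P ≠ 0 ∧ aeval y P = 0 ∧
      ∀ j, pderiv j P ≠ 0 → aeval y (pderiv j P) ≠ 0 := by
  classical
  obtain ⟨P, hPy, hP0⟩ : ∃ P : MvPolynomial ι R, aeval y P = 0 ∧ P ≠ 0 := by
    simpa [algebraicIndependent_iff] using hy
  have hex : ∃ n, ∃ P : MvPolynomial ι R, aeval y P = 0 ∧ P ≠ 0 ∧ P.totalDegree = n :=
    ⟨_, P, hPy, hP0, rfl⟩
  obtain ⟨P, hPy, hP0, hdeg⟩ := Nat.find_spec hex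
  refine ⟨P, hP0, hPy, fun j hj hjy => ?_⟩
  have hmin := Nat.find_min' hex ⟨_, hjy, hj, rfl⟩
  have hlt := totalDegree_pderiv_lt hj
  omega

variable [IsDomain R]

theorem not_algebraicIndependent_of_card_lt [Fintype σ] [Fintype ι]
    (y : ι → MvPolynomial σ R) (h : Fintype.card σ < Fintype.card ι) :
    ¬ AlgebraicIndependent R y := fun hy => by
  have hcard := hy.lift_cardinalMk_le_trdeg
  rw [trdeg_of_isDomain] at hcard
  simp only [Cardinal.mk_fintype, Cardinal.lift_natCast, Nat.cast_le] at hcard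
  omega

variable [CharZero R]

theorem pderiv_ne_zero_of_mem_vars {P : MvPolynomial σ R} {j : σ} (h : j ∈ P.vars) :
    pderiv j P ≠ 0 := by
  obtain ⟨s, hs, hjs⟩ := (mem_vars_iff_mem_support j).mp h
  obtain ⟨m, rfl⟩ : ∃ m, s = m + Finsupp.single j 1 :=
    ⟨s - Finsupp.single j 1, (tsub_add_cancel_of_le (Finsupp.single_le_iff.mpr
      (Nat.one_le_iff_ne_zero.mpr (Finsupp.mem_support_iff.mp hjs)))).symm⟩
  intro h0
  have hcoeff := coeff_pderiv (i := j) P m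
  rw [h0, coeff_zero, eq_comm, mul_eq_zero] at hcoeff
  exact hcoeff.elim (mem_support_iff.mp hs) (Nat.cast_add_one_ne_zero _)

variable [Fintype σ] [DecidableEq σ]

theorem det_jacobian_eq_zero_of_not_algebraicIndependent
    {g : σ → MvPolynomial σ R} (hg : ¬ AlgebraicIndependent R g) : (jacobian g).det = 0 := by
  obtain ⟨P, hP0, hPg, hpderiv⟩ := exists_annihilator_aeval_pderiv_ne_zero hg
  obtain ⟨j, hj⟩ : P.vars.Nonempty := by
    rw [Finset.nonempty_iff_ne_empty, Ne, vars_eq_empty_iff_eq_C]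
    intro hC
    rw [hC, aeval_C, algebraMap_eq, C_eq_zero] at hPg
    rw [hC, hPg, C_0] at hP0
    exact hP0 rfl
  refine exists_mulVec_eq_zero_iff.mp
    ⟨fun j => aeval g (pderiv j P),
      fun h => hpderiv j (pderiv_ne_zero_of_mem_vars hj) (congrFun h j), ?_⟩
  rw [jacobian_mulVec_aeval_pderiv, hPg]
  simp only [map_zero]
  rfl

theorem exists_jacobian_mulVec_eq_single {g : σ → MvPolynomial σ R}
    (hg : AlgebraicIndependent R g) (i : σ) :
    ∃ a c, c ≠ 0 ∧ jacobian g *ᵥ a = Pi.single i c := by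
  set y : Option σ → MvPolynomial σ R := fun o => o.elim (X i) g
  have hy_none : y none = X i := rfl
  have hy_some (j : σ) : y (some j) = g j := rfl
  obtain ⟨P, hP0, hPy, hpderiv⟩ :=
    exists_annihilator_aeval_pderiv_ne_zero (not_algebraicIndependent_of_card_lt y (by simp))
  have hnone : pderiv none P ≠ 0 := by
    intro h0
    have hvars : (P.vars : Set (Option σ)) ⊆ Set.range some := fun o ho => by
      cases o with
      | none => exact absurd h0 (pderiv_ne_zero_of_mem_vars ho)
      | some j => exact ⟨j, rfl⟩
    obtain ⟨Q, rfl⟩ := exists_rename_eq_of_vars_subset_range P some (Option.some_injective _) hvars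
    rw [aeval_rename] at hPy
    exact hP0 (by rw [algebraicIndependent_iff.mp hg Q hPy, map_zero])
  refine ⟨fun j => aeval y (pderiv (some j) P), -aeval y (pderiv none P),
    neg_ne_zero.mpr (hpderiv none hnone), ?_⟩
  funext k
  have hchain := pderiv_aeval y P k
  rw [hPy, map_zero, Fintype.sum_option] at hchain
  simp only [hy_none, hy_some, pderiv_X] at hchain
  simp only [mulVec, dotProduct, jacobian, of_apply]
  rcases eq_or_ne k i with rfl | hki
  · rw [Pi.single_eq_same] at hchain ⊢
    linear_combination -hchain
  · rw [Pi.single_eq_of_ne hki.symm] at hchain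
    rw [Pi.single_eq_of_ne hki]
    linear_combination -hchain

theorem det_jacobian_eq_zero_iff_not_algebraicIndependent {g : σ → MvPolynomial σ R} :
    (jacobian g).det = 0 ↔ ¬ AlgebraicIndependent R g :=
  ⟨fun h hg => det_ne_zero_of_forall_mulVec_eq_single (exists_jacobian_mulVec_eq_single hg) h,
    det_jacobian_eq_zero_of_not_algebraicIndependent⟩

end MvPolynomial

theorem hessian_det_eq_zero_iff_partials_algebraicallyDependent_general
    {K : Type*} [Field K] [CharZero K] {N : ℕ}
    (f : MvPolynomial (Fin (N + 1)) K) :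
    Matrix.det (Matrix.of fun i j : Fin (N + 1) => pderiv i (pderiv j f)) = 0
      ↔ ¬ AlgebraicIndependent K (fun i : Fin (N + 1) => pderiv i f) :=
  det_jacobian_eq_zero_iff_not_algebraicIndependent

/-- The Hessian determinant of a homogeneous polynomial `f` vanishes identically if and
only if the partial derivatives `∂f/∂x₀, …, ∂f/∂x_N` are algebraically dependent over
the base field. -/
theorem hessian_det_eq_zero_iff_partials_algebraicallyDependent
    {K : Type*} [Field K] [IsAlgClosed K] [CharZero K] {N d : ℕ}
    (f : MvPolynomial (Fin (N + 1)) K) (hf : f.IsHomogeneous d) (hd : 1 ≤ d) :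
    Matrix.det (Matrix.of fun i j : Fin (N + 1) => pderiv i (pderiv j f)) = 0
      ↔ ¬ AlgebraicIndependent K (fun i : Fin (N + 1) => pderiv i f) :=
  hessian_det_eq_zero_iff_partials_algebraicallyDependent_general f
end

section
/- A standard graded Artinian Gorenstein algebra A = Q/Ann_f of socle degree 3, where f is a cubic form, has the Strong Lefschetz Property if and only if the Hessian determinant of f is not identically zero. -/
/-!
Send `α ∈ Q` to `α ∘ f ∈ S`; its kernel is `Ann_f`, so `A_k` is the space of
`(3 - k)`-th order derivatives of `f`. For a linear form `L_a = ∑ aᵢ Xᵢ`, Euler's identity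
gives `L_a³ ∘ f = 6 f(a)`, and `(L_a L_b) ∘ f` is the linear form with coefficient vector
`H_f(a) b`, where `H_f` is the Hessian matrix. Hence `L_a³ : A₀ → A₃` is bijective iff
`f(a) ≠ 0`, and, the partials of `f` being independent, `L_a : A₁ → A₂` is bijective iff
`det H_f(a) ≠ 0`. Over the infinite field `K`, a point with `f(a) · hess_f(a) ≠ 0` exists
as soon as `hess_f ≠ 0`.
-/

open MvPolynomial

theorem pderiv_comm' {K : Type*} [CommSemiring K] {n : ℕ} (i j : Fin n)
    (p : MvPolynomial (Fin n) K) :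
    pderiv i (pderiv j p) = pderiv j (pderiv i p) := by
  induction p using MvPolynomial.induction_on with
  | C a => simp
  | add p q hp hq => simp [hp, hq]
  | mul_X p k hp =>
      classical
      simp only [pderiv_mul, map_add, pderiv_mul, hp, pderiv_X]
      by_cases hik : k = i <;> by_cases hjk : k = j <;>
        simp [Pi.single_apply, hik, hjk, apply_ite (pderiv i), apply_ite (pderiv j)] <;>
        ring

/-- The commutative subalgebra of `End_K(K[x₀,…,x_{n-1}])` generated by the
partial-derivative operators `∂/∂x_i`. -/
def pderivSet (K : Type*) [Field K] (n : ℕ) :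
    Set (Module.End K (MvPolynomial (Fin n) K)) :=
  Set.range fun i : Fin n => (pderiv i).toLinearMap

noncomputable def diffOps (K : Type*) [Field K] (n : ℕ) :
    Subalgebra K (Module.End K (MvPolynomial (Fin n) K)) :=
  Algebra.adjoin K (pderivSet K n)

noncomputable instance diffOpsCommSemiring (K : Type*) [Field K] (n : ℕ) :
    CommSemiring (diffOps K n) :=
  { (diffOps K n).toSemiring with
    mul_comm := (Algebra.isMulCommutative_adjoin (s := pderivSet K n) K (by
      rintro a ⟨i, rfl⟩ b ⟨j, rfl⟩
      exact LinearMap.ext fun p => by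
        simpa [Module.End.mul_apply] using (pderiv_comm' (K := K) i j p))).is_comm.comm }

/-- The action of the polynomial ring of differential operators `Q = K[X₀,…,X_{n-1}]`
on `S = K[x₀,…,x_{n-1}]`: `diffOpApply α f` is the result of applying the differential
operator `α(∂/∂x₀, …, ∂/∂x_{n-1})` to `f`. -/
noncomputable def diffOpApply {K : Type*} [Field K] {n : ℕ}
    (α f : MvPolynomial (Fin n) K) : MvPolynomial (Fin n) K :=
  ((MvPolynomial.aeval (fun i : Fin n =>
      (⟨(pderiv i).toLinearMap, Algebra.subset_adjoin ⟨i, rfl⟩⟩ : diffOps K n)) α :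
    diffOps K n) : Module.End K (MvPolynomial (Fin n) K)) f

/-- The annihilator ideal `Ann_f ⊂ Q` of `f ∈ S`: the ideal of differential operators
killing `f` under the differentiation action of `Q` on `S`. -/
noncomputable def annIdeal {K : Type*} [Field K] {n : ℕ} (f : MvPolynomial (Fin n) K) :
    Ideal (MvPolynomial (Fin n) K) where
  carrier := {α | diffOpApply α f = 0}
  zero_mem' := by simp [diffOpApply]
  add_mem' := by
    intro a b ha hb
    simp only [Set.mem_setOf_eq, diffOpApply, map_add] at *
    simp [LinearMap.add_apply, ha, hb]
  smul_mem' := by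
    intro c x hx
    simp only [Set.mem_setOf_eq, diffOpApply, smul_eq_mul, map_mul] at *
    rw [Subalgebra.coe_mul, Module.End.mul_apply, hx, map_zero]

open scoped Matrix

section Homogeneous

variable {σ R : Type*} [CommSemiring R] {p q : MvPolynomial σ R}

lemma MvPolynomial.IsHomogeneous.eq_C_eval (hp : p.IsHomogeneous 0) (x : σ → R) :
    p = C (eval x p) := by
  have hC : p = C (coeff 0 p) := by
    rw [← homogeneousComponent_zero, homogeneousComponent_eq_self hp]
  rw [hC, eval_C]

lemma MvPolynomial.IsHomogeneous.eq_of_forall_pderiv_eq {K : Type*} [Field K] [CharZero K]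
    [Fintype σ] {p q : MvPolynomial σ K} {d : ℕ} (hd : d ≠ 0) (hp : p.IsHomogeneous d)
    (hq : q.IsHomogeneous d) (h : ∀ i, pderiv i p = pderiv i q) : p = q := by
  have := hp.sum_X_mul_pderiv
  rw [Finset.sum_congr rfl fun i _ => by rw [h i], hq.sum_X_mul_pderiv] at this
  exact nsmul_right_injective hd this.symm

end Homogeneous

section LinearForm

variable {σ R : Type*} [Fintype σ] [CommSemiring R]

noncomputable def linearForm (a : σ → R) : MvPolynomial σ R :=
  ∑ i, a i • X i

lemma linearForm_isHomogeneous (a : σ → R) : (linearForm a).IsHomogeneous 1 :=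
  Submodule.sum_mem (homogeneousSubmodule σ R 1) fun i _ =>
    Submodule.smul_mem _ _ (isHomogeneous_X R i)

lemma exists_linearForm_eq {p : MvPolynomial σ R} (hp : p.IsHomogeneous 1) :
    ∃ a, linearForm a = p := by
  rw [← mem_homogeneousSubmodule, homogeneousSubmodule_one_eq_span_X,
    Submodule.mem_span_range_iff_exists_fun] at hp
  exact hp

lemma linearForm_injective : Function.Injective (linearForm : (σ → R) → MvPolynomial σ R) :=
  fun a b h => funext <|
    Fintype.linearIndependent_iffₛ.mp (linearIndependent_X (R := R) (σ := σ)) a b h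

@[simp] lemma linearForm_zero : linearForm (0 : σ → R) = 0 := by
  simp [linearForm]

@[simp] lemma pderiv_linearForm [DecidableEq σ] (a : σ → R) (i : σ) :
    pderiv i (linearForm a) = C (a i) := by
  simp [linearForm, pderiv_X, Pi.single_apply, smul_eq_C_mul]

end LinearForm

noncomputable def hessian {σ R : Type*} [CommSemiring R] (f : MvPolynomial σ R) :
    Matrix σ σ (MvPolynomial σ R) :=
  Matrix.of fun i j => pderiv i (pderiv j f)

section DiffOp

variable {K : Type*} [Field K] {n : ℕ}

@[simp] lemma diffOpApply_X (i : Fin n) (g : MvPolynomial (Fin n) K) :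
    diffOpApply (X i) g = pderiv i g := by
  simp [diffOpApply]

@[simp] lemma diffOpApply_C (c : K) (g : MvPolynomial (Fin n) K) :
    diffOpApply (C c) g = c • g := by
  simp only [diffOpApply, aeval_C]
  rfl

@[simp] lemma diffOpApply_zero (g : MvPolynomial (Fin n) K) :
    diffOpApply (0 : MvPolynomial (Fin n) K) g = 0 := by
  simp [diffOpApply]

lemma diffOpApply_mul (α β g : MvPolynomial (Fin n) K) :
    diffOpApply (α * β) g = diffOpApply α (diffOpApply β g) := by
  simp only [diffOpApply, map_mul]
  rfl

lemma diffOpApply_add (α β g : MvPolynomial (Fin n) K) :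
    diffOpApply (α + β) g = diffOpApply α g + diffOpApply β g := by
  simp only [diffOpApply, map_add]
  rfl

lemma diffOpApply_smul (c : K) (α g : MvPolynomial (Fin n) K) :
    diffOpApply (c • α) g = c • diffOpApply α g := by
  rw [smul_eq_C_mul, diffOpApply_mul, diffOpApply_C]

lemma diffOpApply_sum {ι : Type*} (s : Finset ι) (α : ι → MvPolynomial (Fin n) K)
    (g : MvPolynomial (Fin n) K) :
    diffOpApply (∑ i ∈ s, α i) g = ∑ i ∈ s, diffOpApply (α i) g := by
  simp only [diffOpApply, map_sum, AddSubmonoidClass.coe_finsetSum, LinearMap.coe_sum,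
    Finset.sum_apply]

lemma pderiv_diffOpApply (i : Fin n) (α g : MvPolynomial (Fin n) K) :
    pderiv i (diffOpApply α g) = diffOpApply α (pderiv i g) := by
  rw [← diffOpApply_X, ← diffOpApply_mul, mul_comm, diffOpApply_mul, diffOpApply_X]

lemma diffOpApply_linearForm (a : Fin n → K) (g : MvPolynomial (Fin n) K) :
    diffOpApply (linearForm a) g = ∑ i, a i • pderiv i g := by
  simp only [linearForm, diffOpApply_sum, diffOpApply_smul, diffOpApply_X]

lemma mk_annIdeal_eq_iff (f α β : MvPolynomial (Fin n) K) :
    Ideal.Quotient.mk (annIdeal f) α = Ideal.Quotient.mk (annIdeal f) β ↔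
      diffOpApply α f = diffOpApply β f := by
  rw [Ideal.Quotient.eq, ← sub_eq_zero (a := diffOpApply α f)]
  conv_rhs => rw [← sub_add_cancel α β, diffOpApply_add, add_sub_cancel_right]
  rfl

lemma eval_diffOpApply_linearForm {g : MvPolynomial (Fin n) K} {d : ℕ}
    (hg : g.IsHomogeneous d) (a : Fin n → K) :
    eval a (diffOpApply (linearForm a) g) = d * eval a g := by
  simpa [diffOpApply_linearForm] using congrArg (eval a) hg.sum_X_mul_pderiv

end DiffOp

section CharZero

variable {K : Type*} [Field K] [CharZero K] {n : ℕ}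

lemma isHomogeneous_diffOpApply {α g : MvPolynomial (Fin n) K} {k d : ℕ}
    (hα : α.IsHomogeneous k) (hg : g.IsHomogeneous d) :
    (diffOpApply α g).IsHomogeneous (d - k) := by
  induction k generalizing α with
  | zero =>
    rw [hα.eq_C_eval 0, diffOpApply_C]
    exact Submodule.smul_mem (homogeneousSubmodule _ K d) _ hg
  | succ k ih =>
    have hk : ((k + 1 : ℕ) : K) ≠ 0 := Nat.cast_ne_zero.mpr k.succ_ne_zero
    -- Euler: `(k + 1) • α = ∑ Xᵢ ∂ᵢα`, and `Xᵢ` acts on `S` as `∂ᵢ`.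
    have euler : diffOpApply (((k + 1 : ℕ) : K) • α) g =
        ∑ i, pderiv i (diffOpApply (pderiv i α) g) := by
      rw [Nat.cast_smul_eq_nsmul, ← hα.sum_X_mul_pderiv, diffOpApply_sum]
      simp only [diffOpApply_mul, diffOpApply_X]
    have hsum : (diffOpApply (((k + 1 : ℕ) : K) • α) g).IsHomogeneous (d - (k + 1)) := by
      rw [euler]
      exact IsHomogeneous.sum _ _ _ fun i _ => by
        simpa [Nat.sub_sub] using (ih hα.pderiv).pderiv (i := i)
    rw [diffOpApply_smul] at hsum
    have := Submodule.smul_mem (homogeneousSubmodule _ K _) ((k + 1 : ℕ) : K)⁻¹ hsum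
    rwa [inv_smul_smul₀ hk] at this

lemma eval_diffOpApply_linearForm_pow {g : MvPolynomial (Fin n) K} {d : ℕ}
    (hg : g.IsHomogeneous d) (a : Fin n → K) (k : ℕ) :
    eval a (diffOpApply (linearForm a ^ k) g) = d.descFactorial k * eval a g := by
  induction k generalizing d g with
  | zero => rw [pow_zero, ← C_1, diffOpApply_C, one_smul, Nat.descFactorial_zero, Nat.cast_one,
      one_mul]
  | succ k ih =>
    rw [pow_succ, diffOpApply_mul,
      ih (isHomogeneous_diffOpApply (linearForm_isHomogeneous a) hg),
      eval_diffOpApply_linearForm hg]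
    cases d with
    | zero => simp
    | succ d => rw [Nat.succ_descFactorial_succ]; push_cast; ring

lemma diffOpApply_linearForm_pow_self {f : MvPolynomial (Fin n) K} {d : ℕ}
    (hf : f.IsHomogeneous d) (a : Fin n → K) :
    diffOpApply (linearForm a ^ d) f = C (d.factorial * eval a f) := by
  have h0 : (diffOpApply (linearForm a ^ d) f).IsHomogeneous 0 := by
    simpa using isHomogeneous_diffOpApply ((linearForm_isHomogeneous a).pow d) hf
  rw [h0.eq_C_eval a, eval_diffOpApply_linearForm_pow hf, Nat.descFactorial_self]

/-- Through `α ↦ α ∘ f`, multiplication by `L_a : A₁ → A₂` is the Hessian of `f` at `a`. -/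
lemma diffOpApply_linearForm_mul_linearForm {f : MvPolynomial (Fin n) K}
    (hf : f.IsHomogeneous 3) (a b : Fin n → K) :
    diffOpApply (linearForm a * linearForm b) f =
      linearForm ((hessian f).map (eval a) *ᵥ b) := by
  refine (isHomogeneous_diffOpApply ((linearForm_isHomogeneous a).mul
    (linearForm_isHomogeneous b)) hf).eq_of_forall_pderiv_eq one_ne_zero
    (linearForm_isHomogeneous _) fun k => ?_
  have hlin : (diffOpApply (linearForm b) (pderiv k f)).IsHomogeneous 1 :=
    isHomogeneous_diffOpApply (linearForm_isHomogeneous b) hf.pderiv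
  have heval := diffOpApply_linearForm_pow_self hlin a
  rw [pow_one, Nat.factorial_one, Nat.cast_one, one_mul] at heval
  classical
  rw [pderiv_diffOpApply, diffOpApply_mul, heval, pderiv_linearForm, diffOpApply_linearForm]
  simp only [map_sum, smul_eval, Matrix.mulVec, dotProduct, Matrix.map_apply, hessian,
    Matrix.of_apply]
  exact Finset.sum_congr rfl fun j _ => by rw [pderiv_comm', mul_comm]

end CharZero

section Lefschetz

variable {K : Type*} [Field K] {n : ℕ}

/-- The degree-`k` piece `A_k` of `A = Q ⧸ Ann_f`. -/
def gradedPiece (f : MvPolynomial (Fin n) K) (k : ℕ) :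
    Set (MvPolynomial (Fin n) K ⧸ annIdeal f) :=
  {y | ∃ g : MvPolynomial (Fin n) K, g.IsHomogeneous k ∧ Ideal.Quotient.mk (annIdeal f) g = y}

lemma bijOn_mk_mul_gradedPiece (f : MvPolynomial (Fin n) K) {ℓ : MvPolynomial (Fin n) K}
    {e k : ℕ} (hℓ : ℓ.IsHomogeneous e)
    (hinj : ∀ g₁ g₂ : MvPolynomial (Fin n) K, g₁.IsHomogeneous k → g₂.IsHomogeneous k →
      diffOpApply (ℓ * g₁) f = diffOpApply (ℓ * g₂) f → diffOpApply g₁ f = diffOpApply g₂ f)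
    (hsurj : ∀ g : MvPolynomial (Fin n) K, g.IsHomogeneous (e + k) →
      ∃ g', g'.IsHomogeneous k ∧ diffOpApply (ℓ * g') f = diffOpApply g f) :
    Set.BijOn (fun y => Ideal.Quotient.mk (annIdeal f) ℓ * y)
      (gradedPiece f k) (gradedPiece f (e + k)) := by
  refine ⟨?_, ?_, ?_⟩
  · rintro _ ⟨g, hg, rfl⟩
    exact ⟨ℓ * g, hℓ.mul hg, map_mul _ _ _⟩
  · rintro _ ⟨g₁, hg₁, rfl⟩ _ ⟨g₂, hg₂, rfl⟩ h
    simp only [← map_mul, mk_annIdeal_eq_iff] at h ⊢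
    exact hinj g₁ g₂ hg₁ hg₂ h
  · rintro _ ⟨g, hg, rfl⟩
    obtain ⟨g', hg', h⟩ := hsurj g hg
    exact ⟨_, ⟨g', hg', rfl⟩, by simpa only [← map_mul, mk_annIdeal_eq_iff]⟩

lemma eq_zero_of_diffOpApply_linearForm_eq_zero {f : MvPolynomial (Fin n) K}
    (hli : LinearIndependent K fun i => pderiv i f) {b : Fin n → K}
    (h : diffOpApply (linearForm b) f = 0) : b = 0 :=
  funext (Fintype.linearIndependent_iff.mp hli b (by rwa [diffOpApply_linearForm] at h))

variable [CharZero K]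

lemma det_hessian_map_eval_ne_zero {f : MvPolynomial (Fin n) K} (hf : f.IsHomogeneous 3)
    (hli : LinearIndependent K fun i => pderiv i f) {a : Fin n → K}
    (hinj : Set.InjOn (fun y => Ideal.Quotient.mk (annIdeal f) (linearForm a) * y)
      (gradedPiece f 1)) :
    ((hessian f).map (eval a)).det ≠ 0 := by
  classical
  rw [Ne, ← Matrix.exists_mulVec_eq_zero_iff]
  rintro ⟨b, hb0, hb⟩
  refine hb0 (eq_zero_of_diffOpApply_linearForm_eq_zero hli ?_)
  have hker :
      diffOpApply (linearForm a * linearForm b) f = diffOpApply (linearForm a * 0) f := by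
    rw [diffOpApply_linearForm_mul_linearForm hf, hb, linearForm_zero, mul_zero,
      diffOpApply_zero]
  have := hinj ⟨_, linearForm_isHomogeneous b, rfl⟩ ⟨0, isHomogeneous_zero _ _ _, rfl⟩
    (by simpa only [← map_mul, mk_annIdeal_eq_iff] using hker)
  rwa [mk_annIdeal_eq_iff, diffOpApply_zero] at this

lemma bijOn_mk_linearForm_pow {f : MvPolynomial (Fin n) K} {d : ℕ} (hf : f.IsHomogeneous d)
    {a : Fin n → K} (hfa : eval a f ≠ 0) :
    Set.BijOn (fun y => Ideal.Quotient.mk (annIdeal f) (linearForm a ^ d) * y)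
      (gradedPiece f 0) (gradedPiece f d) := by
  have hP : (d.factorial * eval a f : K) ≠ 0 :=
    mul_ne_zero (Nat.cast_ne_zero.mpr d.factorial_ne_zero) hfa
  have hconst : ∀ c,
      diffOpApply (linearForm a ^ d * C c) f = C (c * (d.factorial * eval a f)) := by
    intro c
    rw [mul_comm, diffOpApply_mul, diffOpApply_linearForm_pow_self hf, diffOpApply_C,
      smul_eq_C_mul, ← map_mul]
  refine bijOn_mk_mul_gradedPiece f (by simpa using (linearForm_isHomogeneous a).pow d) ?_ ?_
  · intro g₁ g₂ hg₁ hg₂ h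
    rw [hg₁.eq_C_eval 0, hg₂.eq_C_eval 0, hconst, hconst, C_inj, mul_left_inj' hP] at h
    rw [hg₁.eq_C_eval 0, hg₂.eq_C_eval 0, h]
  · intro g hg
    have h0 : (diffOpApply g f).IsHomogeneous 0 := by
      simpa using isHomogeneous_diffOpApply hg hf
    refine ⟨C (eval 0 (diffOpApply g f) / (d.factorial * eval a f)), isHomogeneous_C _ _, ?_⟩
    rw [hconst, div_mul_cancel₀ _ hP, ← h0.eq_C_eval]

lemma bijOn_mk_linearForm {f : MvPolynomial (Fin n) K} (hf : f.IsHomogeneous 3)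
    {a : Fin n → K} (hdet : ((hessian f).map (eval a)).det ≠ 0) :
    Set.BijOn (fun y => Ideal.Quotient.mk (annIdeal f) (linearForm a) * y)
      (gradedPiece f 1) (gradedPiece f 2) := by
  have hunit : IsUnit ((hessian f).map (eval a)) :=
    (Matrix.isUnit_iff_isUnit_det _).mpr hdet.isUnit
  refine bijOn_mk_mul_gradedPiece f (linearForm_isHomogeneous a) ?_ ?_
  · intro g₁ g₂ hg₁ hg₂ h
    obtain ⟨b₁, rfl⟩ := exists_linearForm_eq hg₁
    obtain ⟨b₂, rfl⟩ := exists_linearForm_eq hg₂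
    rw [diffOpApply_linearForm_mul_linearForm hf, diffOpApply_linearForm_mul_linearForm hf] at h
    rw [Matrix.mulVec_injective_iff_isUnit.mpr hunit (linearForm_injective h)]
  · intro g hg
    obtain ⟨c, hc⟩ := exists_linearForm_eq (isHomogeneous_diffOpApply hg hf)
    obtain ⟨b, rfl⟩ := Matrix.mulVec_surjective_iff_isUnit.mpr hunit c
    exact ⟨linearForm b, linearForm_isHomogeneous b,
      by rw [diffOpApply_linearForm_mul_linearForm hf, hc]⟩

end Lefschetz

/-- Maeno–Watanabe criterion: a standard graded Artinian Gorenstein algebra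
`A = Q/Ann_f` of socle degree `3` associated to a cubic form `f` (not a cone, i.e. with
linearly independent first partials) has the Strong Lefschetz Property — there is a
linear form `L` such that multiplication `·L^{3-2k} : A_k → A_{3-k}` is bijective for
`k = 0, 1` — if and only if the Hessian determinant of `f` is not identically zero. -/
theorem slp_iff_hessian_det_ne_zero
    {K : Type*} [Field K] [CharZero K] {N : ℕ}
    (f : MvPolynomial (Fin (N + 1)) K) (hf : f.IsHomogeneous 3)
    (hli : LinearIndependent K (fun i : Fin (N + 1) => pderiv i f)) :
    (∃ L : MvPolynomial (Fin (N + 1)) K, L.IsHomogeneous 1 ∧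
      Set.BijOn (fun y => (Ideal.Quotient.mk (annIdeal f) L) ^ 3 * y)
        {y | ∃ g : MvPolynomial (Fin (N + 1)) K, g.IsHomogeneous 0 ∧
          Ideal.Quotient.mk (annIdeal f) g = y}
        {y | ∃ g : MvPolynomial (Fin (N + 1)) K, g.IsHomogeneous 3 ∧
          Ideal.Quotient.mk (annIdeal f) g = y} ∧
      Set.BijOn (fun y => (Ideal.Quotient.mk (annIdeal f) L) * y)
        {y | ∃ g : MvPolynomial (Fin (N + 1)) K, g.IsHomogeneous 1 ∧
          Ideal.Quotient.mk (annIdeal f) g = y}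
        {y | ∃ g : MvPolynomial (Fin (N + 1)) K, g.IsHomogeneous 2 ∧
          Ideal.Quotient.mk (annIdeal f) g = y}) ↔
    Matrix.det (Matrix.of fun i j : Fin (N + 1) => pderiv i (pderiv j f)) ≠ 0 := by
  rw [show Matrix.of (fun i j => pderiv i (pderiv j f)) = hessian f from rfl]
  have hdet_eval : ∀ a, eval a (hessian f).det = ((hessian f).map (eval a)).det :=
    fun a => RingHom.map_det (eval a) (hessian f)
  constructor
  · rintro ⟨L, hL, -, hbij⟩
    obtain ⟨a, rfl⟩ := exists_linearForm_eq hL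
    intro hdet
    apply det_hessian_map_eval_ne_zero hf hli hbij.injOn
    rw [← hdet_eval, hdet, map_zero]
  · intro hdet
    have hf0 : f ≠ 0 := fun h => hli.ne_zero 0 (by rw [h, map_zero])
    obtain ⟨a, ha⟩ : ∃ a, eval a (f * (hessian f).det) ≠ 0 := by
      by_contra! h
      exact mul_ne_zero hf0 hdet (MvPolynomial.funext fun a => by simpa using h a)
    rw [map_mul, hdet_eval] at ha
    refine ⟨linearForm a, linearForm_isHomogeneous a, ?_,
      bijOn_mk_linearForm hf (right_ne_zero_of_mul ha)⟩
    rw [← map_pow]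
    exact bijOn_mk_linearForm_pow hf (left_ne_zero_of_mul ha)
end

section
/- For a cubic f = x_0 g_0 + x_1 g_1 + x_2 g_2 + h with g_i ∈ K[x_{N−1}, x_N] quadratics and h ∈ K[x_3,...,x_N] a cubic (the minimal family normal form), the Hessian matrix evaluated at any point of the 2-plane V(x_3,...,x_N) has rank at most 2. -/
/-!
Every column of the Hessian indexed by a variable `x_j` with `j < N - 1` vanishes on the
plane `x₃ = ⋯ = x_N = 0`. Indeed `∂_j g_l = 0`, so `∂_i ∂_j (x_k g_l)` is either `0` or the
linear form `∂_i g_l` in `x_{N-1}, x_N`, and `∂_i ∂_j h` is a linear form in `x₃, …, x_N`;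
both vanish there because `N - 1 ≥ 3`. Only the two columns `N - 1` and `N` remain.
-/

open MvPolynomial

theorem Matrix.rank_le_card_of_col_eq_zero {m n R : Type*} [Fintype n] [CommRing R]
    [StrongRankCondition R] (A : Matrix m n R) (s : Finset n) (hA : ∀ j ∉ s, A.col j = 0) :
    A.rank ≤ s.card := by
  classical
  have hspan : Submodule.span R (Set.range A.col) ≤ Submodule.span R (s.image A.col : Set _) := by
    refine Submodule.span_le.mpr ?_
    rintro _ ⟨j, rfl⟩
    by_cases hj : j ∈ s
    · exact Submodule.subset_span (Finset.mem_coe.mpr (Finset.mem_image_of_mem _ hj))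
    · rw [hA j hj]
      exact zero_mem _
  calc A.rank ≤ Module.finrank R (Submodule.span R (s.image A.col : Set (m → R))) :=
        A.rank_eq_finrank_span_cols ▸ Submodule.finrank_mono hspan
    _ ≤ (s.image A.col).card := finrank_span_finset_le_card _
    _ ≤ s.card := Finset.card_image_le

namespace MvPolynomial

variable {σ R : Type*} [CommSemiring R] {s : Set σ} {q : MvPolynomial σ R}

theorem pderiv_mem_supported (hq : q ∈ supported R s) (i : σ) : pderiv i q ∈ supported R s := by
  by_cases hi : i ∈ s
  · rw [supported_eq_range_rename] at hq ⊢
    obtain ⟨q', rfl⟩ := hq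
    have hrename := pderiv_rename (R := R) (Subtype.val_injective (p := (· ∈ s))) ⟨i, hi⟩ q'
    exact (AlgHom.mem_range _).mpr ⟨_, hrename.symm⟩
  · rw [pderiv_eq_zero_of_notMem_vars fun h => hi (mem_supported.mp hq h)]
    exact zero_mem _

theorem IsHomogeneous.eval_eq_zero_of_mem_supported {n : ℕ} (hq : q.IsHomogeneous n)
    (hn : n ≠ 0) (hs : q ∈ supported R s) {p : σ → R} (hp : ∀ i ∈ s, p i = 0) :
    eval p q = 0 := by
  rw [eval, eval₂Hom_eq_constantCoeff_of_vars _ fun i hi => hp i (mem_supported.mp hs hi),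
    RingHom.id_apply, constantCoeff_eq]
  exact hq.coeff_eq_zero (by simpa using hn.symm)

theorem eval_pderiv_pderiv_X_mul_eq_zero {n : ℕ} (hq : q.IsHomogeneous n) (hn : 2 ≤ n)
    (hs : q ∈ supported R s) {p : σ → R} (hp : ∀ i ∈ s, p i = 0) {j : σ} (hj : j ∉ s)
    (i k : σ) : eval p (pderiv i (pderiv j (X k * q))) = 0 := by
  classical
  have hqj : pderiv j q = 0 := pderiv_eq_zero_of_notMem_vars fun h => hj (mem_supported.mp hs h)
  rw [Derivation.leibniz, hqj, smul_zero, zero_add]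
  rcases eq_or_ne j k with rfl | hjk
  · rw [pderiv_X_self, smul_eq_mul, mul_one]
    exact hq.pderiv.eval_eq_zero_of_mem_supported (by omega) (pderiv_mem_supported hs i) hp
  · rw [pderiv_X_of_ne hjk.symm, smul_zero, map_zero, map_zero]

end MvPolynomial

theorem minimal_family_hessian_rank_le_two_general
    {K : Type*} [Field K] {N : ℕ} (hN : 4 ≤ N)
    (g : Fin 3 → MvPolynomial (Fin (N + 1)) K)
    (hg2 : ∀ i, (g i).IsHomogeneous 2)
    (hgsupp : ∀ i, g i ∈ MvPolynomial.supported K {j : Fin (N + 1) | N - 1 ≤ (j : ℕ)})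
    (h : MvPolynomial (Fin (N + 1)) K) (hh3 : h.IsHomogeneous 3)
    (hhsupp : h ∈ MvPolynomial.supported K {j : Fin (N + 1) | 3 ≤ (j : ℕ)})
    (f : MvPolynomial (Fin (N + 1)) K)
    (hf : f = X 0 * g 0 + X 1 * g 1 + X 2 * g 2 + h)
    (p : Fin (N + 1) → K) (hp : ∀ j : Fin (N + 1), 3 ≤ (j : ℕ) → p j = 0) :
    Matrix.rank (Matrix.of fun i j : Fin (N + 1) =>
      MvPolynomial.eval p (pderiv i (pderiv j f))) ≤ 2 := by
  have hpg : ∀ j ∈ {j : Fin (N + 1) | N - 1 ≤ (j : ℕ)}, p j = 0 := fun j hj =>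
    hp j (by rw [Set.mem_ofPred_eq] at hj; omega)
  refine (Matrix.rank_le_card_of_col_eq_zero _ {⟨N - 1, by omega⟩, Fin.last N}
    fun j hj => ?_).trans Finset.card_le_two
  have hj' : j ∉ {j : Fin (N + 1) | N - 1 ≤ (j : ℕ)} := by
    simp only [Finset.mem_insert, Finset.mem_singleton, Fin.ext_iff, Fin.val_last] at hj
    simp only [Set.mem_ofPred_eq]
    omega
  have hh : ∀ i, eval p (pderiv i (pderiv j h)) = 0 := fun i =>
    hh3.pderiv.pderiv.eval_eq_zero_of_mem_supported (by norm_num)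
      (pderiv_mem_supported (pderiv_mem_supported hhsupp j) i) hp
  ext i
  simp only [Matrix.col_apply, Matrix.of_apply, Pi.zero_apply, hf, map_add, hh,
    eval_pderiv_pderiv_X_mul_eq_zero (hg2 _) le_rfl (hgsupp _) hpg hj', add_zero]

/-- For a minimal-family cubic `f = x₀g₀ + x₁g₁ + x₂g₂ + h`, with `g₀,g₁,g₂` quadratic
forms in the two variables `x_{N-1}, x_N` and `h` a cubic form in `x₃,…,x_N`, the
Hessian matrix of `f` evaluated at any point of the 2-plane `V(x₃,…,x_N)` has rank at
most `2`. -/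
theorem minimal_family_hessian_rank_le_two
    {K : Type*} [Field K] [CharZero K] {N : ℕ} (hN : 4 ≤ N)
    (g : Fin 3 → MvPolynomial (Fin (N + 1)) K)
    (hg2 : ∀ i, (g i).IsHomogeneous 2)
    (hgsupp : ∀ i, g i ∈ MvPolynomial.supported K {j : Fin (N + 1) | N - 1 ≤ (j : ℕ)})
    (h : MvPolynomial (Fin (N + 1)) K) (hh3 : h.IsHomogeneous 3)
    (hhsupp : h ∈ MvPolynomial.supported K {j : Fin (N + 1) | 3 ≤ (j : ℕ)})
    (f : MvPolynomial (Fin (N + 1)) K)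
    (hf : f = X 0 * g 0 + X 1 * g 1 + X 2 * g 2 + h)
    (p : Fin (N + 1) → K) (hp : ∀ j : Fin (N + 1), 3 ≤ (j : ℕ) → p j = 0) :
    Matrix.rank (Matrix.of fun i j : Fin (N + 1) =>
      MvPolynomial.eval p (pderiv i (pderiv j f))) ≤ 2 :=
  minimal_family_hessian_rank_le_two_general hN g hg2 hgsupp h hh3 hhsupp f hf p hp
end

section
/- For the minimal family cubic f = x_0 g_0 + x_1 g_1 + x_2 g_2 + h (g_i quadratics in x_{N−1}, x_N, h cubic in x_3,...,x_N), the Hessian determinant of f vanishes identically. -/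
open MvPolynomial

lemma pderiv_supported_zero {K : Type*} [Field K] {n : ℕ}
    {p : MvPolynomial (Fin n) K} {s : Set (Fin n)}
    (hp : p ∈ MvPolynomial.supported K s) {i : Fin n} (hi : i ∉ s) :
    pderiv i p = 0 :=
  pderiv_eq_zero_of_notMem_vars fun hmem => hi ((mem_supported.mp hp) hmem)

/-- For a minimal-family cubic `f = x₀g₀ + x₁g₁ + x₂g₂ + h`, with `g₀,g₁,g₂` quadratic
forms in the two variables `x_{N-1}, x_N` and `h` a cubic form in `x₃,…,x_N`, the
Hessian determinant of `f` vanishes identically. -/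
theorem minimal_family_hessian_det_eq_zero
    {K : Type*} [Field K] [CharZero K] {N : ℕ} (hN : 4 ≤ N)
    (g : Fin 3 → MvPolynomial (Fin (N + 1)) K)
    (hg2 : ∀ i, (g i).IsHomogeneous 2)
    (hgsupp : ∀ i, g i ∈ MvPolynomial.supported K {j : Fin (N + 1) | N - 1 ≤ (j : ℕ)})
    (h : MvPolynomial (Fin (N + 1)) K) (hh3 : h.IsHomogeneous 3)
    (hhsupp : h ∈ MvPolynomial.supported K {j : Fin (N + 1) | 3 ≤ (j : ℕ)})
    (f : MvPolynomial (Fin (N + 1)) K)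
    (hf : f = X 0 * g 0 + X 1 * g 1 + X 2 * g 2 + h) :
    Matrix.det (Matrix.of fun i j : Fin (N + 1) => pderiv i (pderiv j f)) = 0 := by
  -- values of the small numerals in `Fin (N+1)`
  have hv0 : ((0 : Fin (N + 1)) : ℕ) = 0 := rfl
  have hv1 : ((1 : Fin (N + 1)) : ℕ) = 1 := by
    rw [Fin.val_one']; exact Nat.mod_eq_of_lt (by omega)
  have hv2 : ((2 : Fin (N + 1)) : ℕ) = 2 := by
    have : ((2 : Fin (N + 1)) : ℕ) = 2 % (N + 1) := rfl
    rw [this, Nat.mod_eq_of_lt (by omega)]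
  -- derivatives of the g's and h with respect to small variables vanish
  have hgd : ∀ (k : Fin 3) (a : Fin (N + 1)), ((a : ℕ) < N - 1) → pderiv a (g k) = 0 := by
    intro k a ha
    exact pderiv_supported_zero (hgsupp k) (by simp only [Set.mem_setOf_eq]; omega)
  have hhd : ∀ (a : Fin (N + 1)), ((a : ℕ) < 3) → pderiv a h = 0 := by
    intro a ha
    exact pderiv_supported_zero hhsupp (by simp only [Set.mem_setOf_eq]; omega)
  -- first derivatives with respect to the small variables
  have hd : ∀ (j : Fin (N + 1)) (hj : (j : ℕ) < 3), pderiv j f = g ⟨(j : ℕ), hj⟩ := by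
    intro j hj
    have hjlt : (j : ℕ) < N - 1 := by omega
    have h0 : pderiv j h = 0 := hhd j hj
    have hgj : ∀ k : Fin 3, pderiv j (g k) = 0 := fun k => hgd k j hjlt
    interval_cases hji : (j : ℕ)
    · have hj0 : j = 0 := by rw [Fin.ext_iff, hv0]; exact hji
      subst hj0
      rw [hf]
      simp [pderiv_mul, hgj, h0, pderiv_X_self,
        pderiv_X_of_ne (show (1 : Fin (N+1)) ≠ 0 from by
          intro he; rw [Fin.ext_iff, hv0, hv1] at he; omega),
        pderiv_X_of_ne (show (2 : Fin (N+1)) ≠ 0 from by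
          intro he; rw [Fin.ext_iff, hv0, hv2] at he; omega)]
    · have hj1 : j = 1 := by rw [Fin.ext_iff, hv1]; exact hji
      subst hj1
      rw [hf]
      simp [pderiv_mul, hgj, h0, pderiv_X_self,
        pderiv_X_of_ne (show (0 : Fin (N+1)) ≠ 1 from by
          intro he; rw [Fin.ext_iff, hv0, hv1] at he; omega),
        pderiv_X_of_ne (show (2 : Fin (N+1)) ≠ 1 from by
          intro he; rw [Fin.ext_iff, hv1, hv2] at he; omega)]
    · have hj2 : j = 2 := by rw [Fin.ext_iff, hv2]; exact hji
      subst hj2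
      rw [hf]
      simp [pderiv_mul, hgj, h0, pderiv_X_self,
        pderiv_X_of_ne (show (0 : Fin (N+1)) ≠ 2 from by
          intro he; rw [Fin.ext_iff, hv0, hv2] at he; omega),
        pderiv_X_of_ne (show (1 : Fin (N+1)) ≠ 2 from by
          intro he; rw [Fin.ext_iff, hv1, hv2] at he; omega)]
  -- the key vanishing of Hessian entries
  have hentry : ∀ (a j : Fin (N + 1)), ((j : ℕ) < 3) → ((a : ℕ) < N - 1) →
      pderiv a (pderiv j f) = 0 := by
    intro a j hj ha
    rw [hd j hj]
    exact hgd _ a ha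
  -- compute the determinant term by term
  rw [Matrix.det_apply]
  refine Finset.sum_eq_zero fun σ _ => ?_
  -- there is a small index whose image under σ is small
  have key : ∃ i : Fin (N + 1), ((i : ℕ) < 3) ∧ ((σ i : ℕ) < N - 1) := by
    by_contra hcon
    push_neg at hcon
    set i0 : Fin (N + 1) := ⟨0, by omega⟩
    set i1 : Fin (N + 1) := ⟨1, by omega⟩
    set i2 : Fin (N + 1) := ⟨2, by omega⟩
    have h0 : N - 1 ≤ ((σ i0 : ℕ)) := hcon i0 (by simp [i0])
    have h1 : N - 1 ≤ ((σ i1 : ℕ)) := hcon i1 (by simp [i1])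
    have h2 : N - 1 ≤ ((σ i2 : ℕ)) := hcon i2 (by simp [i2])
    have b0 := (σ i0).isLt
    have b1 := (σ i1).isLt
    have b2 := (σ i2).isLt
    have heq : ((σ i0 : ℕ) = (σ i1 : ℕ)) ∨ ((σ i0 : ℕ) = (σ i2 : ℕ)) ∨
        ((σ i1 : ℕ) = (σ i2 : ℕ)) := by omega
    rcases heq with he | he | he
    · have := σ.injective (Fin.ext he)
      rw [Fin.ext_iff] at this; simp [i0, i1] at this
    · have := σ.injective (Fin.ext he)
      rw [Fin.ext_iff] at this; simp [i0, i2] at this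
    · have := σ.injective (Fin.ext he)
      rw [Fin.ext_iff] at this; simp [i1, i2] at this
  obtain ⟨i, hi3, hiN⟩ := key
  have hz : (Matrix.of fun i j : Fin (N + 1) => pderiv i (pderiv j f)) (σ i) i = 0 := by
    simpa using hentry (σ i) i hi3 hiN
  have hp : (∏ k : Fin (N + 1),
      (Matrix.of fun i j : Fin (N + 1) => pderiv i (pderiv j f)) (σ k) k) = 0 :=
    Finset.prod_eq_zero (Finset.mem_univ i) hz
  rw [hp, smul_zero]
end

section
/- Let n ≥ 3 and in K[x_{n+1},...,x_{2n}] set Π = x_{n+1}···x_{2n}, L = x_{n+1} + ... + x_{2n}, Δ_i = L·Π/x_{n+1+i} for 0 ≤ i ≤ n−1, and Δ_n = Π. Then the products δ_{ij} = Δ_i Δ_j for 0 ≤ i ≤ j ≤ n are linearly independent over K. -/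
/-!
Index the `Δ`'s by `Option σ`, with `none` standing for `Δ_n = Π`. Every product `Δ_x Δ_y` is a
sum of monomials with coefficient one, and each unordered pair has a witness monomial, built from
an index `a` different from `i` and `j`: `x_a² Π² / (x_i x_j)` for `{i, j}`, `x_a Π² / x_i` for
`{i, n}` and `Π²` for `{n, n}`. The witness of a pair occurs in no other product with at least as
many factors `Δ_n`: an exponent `4` at `a` forces both factors to contribute `x_a` through `L`.
Ordering the pairs by their number of factors `Δ_n` makes the coefficient matrix triangular with
ones on the diagonal.
-/

open MvPolynomial Finset

theorem linearIndependent_of_triangular {ι R M : Type*} [Fintype ι] [Ring R] [NoZeroDivisors R]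
    [AddCommGroup M] [Module R M] (f : ι → M) (φ : ι → M →ₗ[R] R) (r : ι → ℕ)
    (hdiag : ∀ i, φ i (f i) ≠ 0) (hzero : ∀ i j, r i ≤ r j → j ≠ i → φ i (f j) = 0) :
    LinearIndependent R f := by
  rw [Fintype.linearIndependent_iff]
  intro g hg i
  induction hi : r i using Nat.strong_induction_on generalizing i with
  | _ k ih =>
    have hφ := congrArg (φ i) hg
    rw [map_sum, Finset.sum_eq_single i, map_smul, smul_eq_mul, map_zero] at hφ
    · exact (mul_eq_zero.mp hφ).resolve_right (hdiag i)
    · intro j _ hji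
      rcases lt_or_ge (r j) (r i) with hlt | hle
      · rw [ih _ (hi ▸ hlt) j rfl, zero_smul, map_zero]
      · rw [map_smul, hzero i j hle hji, smul_zero]
    · simp

theorem exists_ne_ne_of_three_le_card {α : Type*} [Fintype α] [DecidableEq α]
    (hα : 3 ≤ Fintype.card α) (i j : α) : ∃ a, a ≠ i ∧ a ≠ j := by
  obtain ⟨a, -, ha⟩ := exists_mem_notMem_of_card_lt_card (s := {i, j}) (t := univ)
    (card_le_two.trans_lt (by rwa [card_univ]))
  exact ⟨a, by simpa [not_or] using ha⟩

theorem MvPolynomial.prod_X_eq_monomial {σ R : Type*} [CommSemiring R] (s : Finset σ) :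
    ∏ t ∈ s, (X t : MvPolynomial σ R) = monomial (∑ t ∈ s, Finsupp.single t 1) 1 := by
  simp_rw [monomial_sum_one, X]

namespace DeltaProducts

variable {σ : Type*} [Fintype σ] [DecidableEq σ]

noncomputable def deltaExp (i k : σ) : σ →₀ ℕ :=
  ∑ t ∈ univ.erase i, Finsupp.single t 1 + Finsupp.single k 1

noncomputable def onesExp : σ →₀ ℕ := ∑ t, Finsupp.single t 1

theorem deltaExp_apply (i k t : σ) :
    deltaExp i k t = (if t = i then 0 else 1) + if t = k then 1 else 0 := by
  simp [deltaExp, Finsupp.single_apply, eq_comm]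

theorem onesExp_apply (t : σ) : onesExp t = 1 := by
  simp [onesExp, Finsupp.single_apply]

theorem deltaExp_self (i : σ) : deltaExp i i = onesExp :=
  sum_erase_add _ _ (mem_univ i)

theorem deltaExp_add_deltaExp_eq_iff {i j a : σ} (hai : a ≠ i) (haj : a ≠ j) {p q k l : σ} :
    deltaExp p k + deltaExp q l = deltaExp i a + deltaExp j a ↔
      ((p = i ∧ q = j) ∨ (p = j ∧ q = i)) ∧ k = a ∧ l = a := by
  constructor
  · intro h
    have := fun t => DFunLike.congr_fun h t
    simp only [Finsupp.add_apply, deltaExp_apply] at this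
    have ha := this a; have hi := this i; have hj := this j
    grind
  · rintro ⟨⟨rfl, rfl⟩ | ⟨rfl, rfl⟩, rfl, rfl⟩
    · rfl
    · exact add_comm _ _

theorem deltaExp_eq_iff {i a : σ} (hai : a ≠ i) {p k : σ} :
    deltaExp p k = deltaExp i a ↔ p = i ∧ k = a := by
  constructor
  · intro h
    have := fun t => DFunLike.congr_fun h t
    simp only [deltaExp_apply] at this
    have ha := this a; have hi := this i
    grind
  · rintro ⟨rfl, rfl⟩
    rfl

theorem deltaExp_add_onesExp_ne {i j a : σ} (hai : a ≠ i) (haj : a ≠ j) (p k : σ) :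
    deltaExp p k + onesExp ≠ deltaExp i a + deltaExp j a := by
  intro h
  have := DFunLike.congr_fun h a
  simp only [Finsupp.add_apply, deltaExp_apply, onesExp_apply] at this
  grind

theorem onesExp_ne_deltaExp {i a : σ} (hai : a ≠ i) : onesExp ≠ deltaExp i a := by
  intro h
  have := DFunLike.congr_fun h i
  simp only [deltaExp_apply, onesExp_apply] at this
  grind

section Polynomials

variable (R : Type*) [CommSemiring R]

noncomputable def deltaPoly : Option σ → MvPolynomial σ R
  | none => ∏ t, X t
  | some i => (∑ t, X t) * ∏ t ∈ univ.erase i, X t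

variable {R}

theorem deltaPoly_none : deltaPoly R (none : Option σ) = monomial onesExp 1 :=
  prod_X_eq_monomial _

theorem deltaPoly_some (i : σ) : deltaPoly R (some i) = ∑ k, monomial (deltaExp i k) 1 := by
  simp_rw [deltaPoly, prod_X_eq_monomial, sum_mul, X, monomial_mul, one_mul, deltaExp, add_comm]

theorem coeff_deltaPoly_some_mul_some (m : σ →₀ ℕ) (i j : σ) :
    coeff m (deltaPoly R (some i) * deltaPoly R (some j)) =
      ∑ k, ∑ l, if deltaExp i k + deltaExp j l = m then 1 else 0 := by
  simp_rw [deltaPoly_some, sum_mul_sum, monomial_mul, one_mul, coeff_sum, coeff_monomial]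

theorem coeff_deltaPoly_some_mul_none (m : σ →₀ ℕ) (i : σ) :
    coeff m (deltaPoly R (some i) * deltaPoly R none) =
      ∑ k, if deltaExp i k + onesExp = m then 1 else 0 := by
  simp_rw [deltaPoly_some, deltaPoly_none, sum_mul, monomial_mul, one_mul, coeff_sum,
    coeff_monomial]

theorem coeff_deltaPoly_none_mul_none (m : σ →₀ ℕ) :
    coeff m (deltaPoly R (none : Option σ) * deltaPoly R none) =
      if onesExp + onesExp = m then 1 else 0 := by
  rw [deltaPoly_none, monomial_mul, one_mul, coeff_monomial]

section Witnesses

variable {i j a : σ}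

theorem coeff_deltaExp_add_deltaExp_some_mul_some (hai : a ≠ i) (haj : a ≠ j) (p q : σ) :
    coeff (deltaExp i a + deltaExp j a) (deltaPoly R (some p) * deltaPoly R (some q)) =
      if (p = i ∧ q = j) ∨ (p = j ∧ q = i) then 1 else 0 := by
  simp [coeff_deltaPoly_some_mul_some, deltaExp_add_deltaExp_eq_iff hai haj, ite_and]

theorem coeff_deltaExp_add_deltaExp_some_mul_none (hai : a ≠ i) (haj : a ≠ j) (p : σ) :
    coeff (deltaExp i a + deltaExp j a) (deltaPoly R (some p) * deltaPoly R none) = 0 := by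
  simp [coeff_deltaPoly_some_mul_none, deltaExp_add_onesExp_ne hai haj]

theorem coeff_deltaExp_add_deltaExp_none_mul_none (hai : a ≠ i) (haj : a ≠ j) :
    coeff (deltaExp i a + deltaExp j a) (deltaPoly R none * deltaPoly R none) = 0 := by
  rw [coeff_deltaPoly_none_mul_none, if_neg]
  nth_rw 1 [← deltaExp_self i]
  exact deltaExp_add_onesExp_ne hai haj i i

theorem coeff_deltaExp_add_onesExp_some_mul_none (hai : a ≠ i) (p : σ) :
    coeff (deltaExp i a + onesExp) (deltaPoly R (some p) * deltaPoly R none) =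
      if p = i then 1 else 0 := by
  simp [coeff_deltaPoly_some_mul_none, deltaExp_eq_iff hai, ite_and]

theorem coeff_deltaExp_add_onesExp_none_mul_none (hai : a ≠ i) :
    coeff (deltaExp i a + onesExp) (deltaPoly R none * deltaPoly R none) = 0 := by
  simp [coeff_deltaPoly_none_mul_none, onesExp_ne_deltaExp hai]

theorem coeff_onesExp_add_onesExp_none_mul_none :
    coeff (onesExp + onesExp) (deltaPoly R (none : Option σ) * deltaPoly R none) = 1 := by
  rw [coeff_deltaPoly_none_mul_none, if_pos rfl]

end Witnesses

noncomputable def deltaTarget (a : σ → σ → σ) : Option σ × Option σ → σ →₀ ℕ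
  | (some i, some j) => deltaExp i (a i j) + deltaExp j (a i j)
  | (some i, none) | (none, some i) => deltaExp i (a i i) + onesExp
  | (none, none) => onesExp + onesExp

def noneCount : Option σ × Option σ → ℕ
  | (some _, some _) => 0
  | (none, none) => 2
  | _ => 1

theorem coeff_deltaTarget_of_noneCount_le {a : σ → σ → σ} (ha : ∀ i j, a i j ≠ i ∧ a i j ≠ j)
    {u v : Option σ × Option σ} (h : noneCount u ≤ noneCount v) :
    coeff (deltaTarget a u) (deltaPoly R v.1 * deltaPoly R v.2) =
      if v = u ∨ v = u.swap then 1 else 0 := by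
  rcases u with ⟨_ | i, _ | j⟩ <;> rcases v with ⟨_ | p, _ | q⟩ <;>
    simp [noneCount, deltaTarget, mul_comm (deltaPoly R none), ha,
      coeff_deltaExp_add_deltaExp_some_mul_some, coeff_deltaExp_add_deltaExp_some_mul_none,
      coeff_deltaExp_add_deltaExp_none_mul_none, coeff_deltaExp_add_onesExp_some_mul_none,
      coeff_deltaExp_add_onesExp_none_mul_none, coeff_onesExp_add_onesExp_none_mul_none] at h ⊢

variable (σ R) in
noncomputable def deltaProduct : Sym2 (Option σ) → MvPolynomial σ R :=
  Sym2.lift ⟨fun x y => deltaPoly R x * deltaPoly R y, fun _ _ => mul_comm _ _⟩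

theorem deltaProduct_mk (x y : Option σ) :
    deltaProduct σ R s(x, y) = deltaPoly R x * deltaPoly R y :=
  rfl

end Polynomials

theorem linearIndependent_deltaProduct {R : Type*} [CommRing R] [IsDomain R]
    (hσ : 3 ≤ Fintype.card σ) : LinearIndependent R (deltaProduct σ R) := by
  choose a ha using exists_ne_ne_of_three_le_card hσ
  have hmk : ∀ z : Sym2 (Option σ), s(z.out.1, z.out.2) = z := Quot.out_eq
  have hcoeff : ∀ z w : Sym2 (Option σ), noneCount z.out ≤ noneCount w.out →
      lcoeff R (deltaTarget a z.out) (deltaProduct σ R w) = if w = z then 1 else 0 := by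
    intro z w h
    have := coeff_deltaTarget_of_noneCount_le (R := R) ha h
    simp only [← deltaProduct_mk, ← Sym2.mk_eq_mk_iff, hmk] at this
    exact this
  refine linearIndependent_of_triangular _ (fun z => lcoeff R (deltaTarget a z.out))
    (fun z => noneCount z.out) (fun z => ?_) (fun z w h hwz => ?_)
  · simp [hcoeff z z le_rfl]
  · simp [hcoeff z w h, hwz]

end DeltaProducts

open DeltaProducts

theorem deltas_products_linearIndependent_general
    {K : Type*} [Field K] {n : ℕ} (hn : 3 ≤ n)
    (Δ : Fin (n + 1) → MvPolynomial (Fin n) K)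
    (hΔ : ∀ i : Fin (n + 1), Δ i = if h : (i : ℕ) < n
        then (∑ j : Fin n, X j) * ∏ j ∈ Finset.univ.erase (⟨(i : ℕ), h⟩ : Fin n), X j
        else ∏ j : Fin n, X j) :
    LinearIndependent K
      (fun p : {p : Fin (n + 1) × Fin (n + 1) // p.1 ≤ p.2} => Δ p.1.1 * Δ p.1.2) := by
  have hΔ' : Δ = deltaPoly K ∘ finSuccEquivLast := by
    funext i
    induction i using Fin.lastCases <;> simp [hΔ, deltaPoly]
  have hfamily : (fun p : {p : Fin (n + 1) × Fin (n + 1) // p.1 ≤ p.2} => Δ p.1.1 * Δ p.1.2) =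
      deltaProduct (Fin n) K ∘ Sym2.map finSuccEquivLast ∘ Sym2.sortEquiv.symm := by
    funext p
    simp [hΔ', deltaProduct_mk]
  rw [hfamily]
  exact (linearIndependent_deltaProduct (by simpa using hn)).comp _
    ((Sym2.map.injective finSuccEquivLast.injective).comp Sym2.sortEquiv.symm.injective)

/-- Let `n ≥ 3` and work in `K[x_{n+1},…,x_{2n}]` (the `n` variables indexed by
`Fin n`, where index `i` stands for `x_{n+1+i}`).  With `Π = x_{n+1}⋯x_{2n}`,
`L = x_{n+1}+⋯+x_{2n}`, `Δ_i = L·Π/x_{n+1+i}` for `0 ≤ i ≤ n-1` and `Δ_n = Π`,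
the products `δ_{ij} = Δ_iΔ_j` for `0 ≤ i ≤ j ≤ n` are linearly independent over `K`. -/
theorem deltas_products_linearIndependent
    {K : Type*} [Field K] [CharZero K] {n : ℕ} (hn : 3 ≤ n)
    (Δ : Fin (n + 1) → MvPolynomial (Fin n) K)
    (hΔ : ∀ i : Fin (n + 1), Δ i = if h : (i : ℕ) < n
        then (∑ j : Fin n, X j) * ∏ j ∈ Finset.univ.erase (⟨(i : ℕ), h⟩ : Fin n), X j
        else ∏ j : Fin n, X j) :
    LinearIndependent K
      (fun p : {p : Fin (n + 1) × Fin (n + 1) // p.1 ≤ p.2} => Δ p.1.1 * Δ p.1.2) :=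
  deltas_products_linearIndependent_general hn Δ hΔ
end

section
/- With notation Δ_i as above (n ≥ 3, δ_{ij} = Δ_iΔ_j), the collection of polynomials {x_{n+1}δ_{ij} : i,j ≠ 0} ∪ {x_{n+2}δ_{ij} : i,j ≠ 1} ∪ ... ∪ {x_{2n}δ_{ij} : i,j ≠ n−1} is linearly independent over K. -/
open MvPolynomial Finset

private noncomputable def W {n : ℕ} (i : Fin n) : Fin n →₀ ℕ :=
  ∑ j ∈ univ.erase i, Finsupp.single j 1

private noncomputable def U (n : ℕ) : Fin n →₀ ℕ := ∑ j, Finsupp.single j 1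

private lemma W_apply {n : ℕ} (i k : Fin n) : W i k = if i = k then 0 else 1 := by
  rw [W, Finsupp.finset_sum_apply]
  simp only [Finsupp.single_apply]
  rw [Finset.sum_ite_eq' (univ.erase i) k (fun _ => 1)]
  by_cases h : i = k
  · simp [h]
  · simp [h, Ne.symm h]

private lemma U_apply {n : ℕ} (k : Fin n) : U n k = 1 := by
  rw [U, Finsupp.finset_sum_apply]
  simp only [Finsupp.single_apply]
  rw [Finset.sum_ite_eq' univ k (fun _ => 1)]
  simp

section Keys
variable {n : ℕ}

private lemma key1a (l i j l' i' j' a b : Fin n) (hij : (i:ℕ) ≤ j) (hil : i ≠ l) (hjl : j ≠ l)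
    (hij' : (i':ℕ) ≤ j') (hil' : i' ≠ l') (hjl' : j' ≠ l') :
    (Finsupp.single l' 1 + W i' + W j' + Finsupp.single a 1 + Finsupp.single b 1 =
      Finsupp.single l 1 + Finsupp.single l 1 + Finsupp.single l 1 + W i + W j) ↔
      (l' = l ∧ i' = i ∧ j' = j ∧ a = l ∧ b = l) := by
  constructor
  · intro H
    have Hk := fun k => congrFun (congrArg (fun f : Fin n →₀ ℕ => (f : Fin n → ℕ)) H) k
    simp only [Finsupp.coe_add, Pi.add_apply, Finsupp.single_apply, W_apply] at Hk
    have h1 := Hk l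
    simp only [if_pos rfl, if_neg hil, if_neg hjl] at h1
    have hl' : l' = l := by
      rcases eq_or_ne l' l with h | h
      · exact h
      · rw [if_neg h] at h1; split_ifs at h1 <;> omega
    have ha : a = l := by
      rcases eq_or_ne a l with h | h
      · exact h
      · rw [if_neg h] at h1; split_ifs at h1 <;> omega
    have hb : b = l := by
      rcases eq_or_ne b l with h | h
      · exact h
      · rw [if_neg h] at h1; split_ifs at h1 <;> omega
    subst hl' ha hb
    have hii' : i' = i := by
      by_contra h
      have h4 := Hk i'
      rw [if_neg (Ne.symm hil'), if_pos rfl, if_neg (Ne.symm h)] at h4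
      have hji' : j = i' := by
        rcases eq_or_ne j i' with hh | hh
        · exact hh
        · rw [if_neg hh] at h4; split_ifs at h4 <;> omega
      have h5 := Hk j'
      rw [if_neg (Ne.symm hjl'), if_pos rfl] at h5
      simp only [← Fin.val_eq_val] at h5
      have v1 : (i':ℕ) ≠ i := fun hh => h (Fin.val_eq_val i' i |>.1 hh)
      have v2 : (j:ℕ) = i' := congrArg Fin.val hji'
      split_ifs at h5 <;> omega
    subst hii'
    have hjj' : j' = j := by
      by_contra h
      have h5 := Hk j'
      rw [if_neg (Ne.symm hjl'), if_pos rfl, if_neg (Ne.symm h)] at h5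
      split_ifs at h5 <;> omega
    exact ⟨rfl, rfl, hjj', rfl, rfl⟩
  · rintro ⟨rfl, rfl, rfl, rfl, rfl⟩
    abel

private lemma key1b (l i j l' i' a : Fin n) (hil : i ≠ l) (hjl : j ≠ l) :
    ¬(Finsupp.single l' 1 + W i' + U n + Finsupp.single a 1 =
      Finsupp.single l 1 + Finsupp.single l 1 + Finsupp.single l 1 + W i + W j) := by
  intro H
  have h := fun k => congrFun (congrArg (fun f : Fin n →₀ ℕ => (f : Fin n → ℕ)) H) k
  simp only [Finsupp.coe_add, Pi.add_apply, Finsupp.single_apply, W_apply, U_apply] at h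
  have h1 := h l
  rw [if_pos rfl, if_neg hil, if_neg hjl] at h1
  split_ifs at h1 <;> omega

private lemma key1c (l i j l' : Fin n) (hil : i ≠ l) (hjl : j ≠ l) :
    ¬(Finsupp.single l' 1 + U n + U n =
      Finsupp.single l 1 + Finsupp.single l 1 + Finsupp.single l 1 + W i + W j) := by
  intro H
  have h := fun k => congrFun (congrArg (fun f : Fin n →₀ ℕ => (f : Fin n → ℕ)) H) k
  simp only [Finsupp.coe_add, Pi.add_apply, Finsupp.single_apply, W_apply, U_apply] at h
  have h1 := h l
  rw [if_pos rfl, if_neg hil, if_neg hjl] at h1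
  split_ifs at h1 <;> omega

private lemma key2b (l i l' i' a : Fin n) (hil : i ≠ l) (hil' : i' ≠ l') :
    (Finsupp.single l' 1 + W i' + U n + Finsupp.single a 1 =
      Finsupp.single l 1 + Finsupp.single l 1 + W i + U n) ↔ (l' = l ∧ i' = i ∧ a = l) := by
  constructor
  · intro H
    have h := fun k => congrFun (congrArg (fun f : Fin n →₀ ℕ => (f : Fin n → ℕ)) H) k
    simp only [Finsupp.coe_add, Pi.add_apply, Finsupp.single_apply, W_apply, U_apply] at h
    have h1 := h l
    rw [if_pos rfl, if_neg hil] at h1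
    have hl' : l' = l := by
      rcases eq_or_ne l' l with hh | hh
      · exact hh
      · rw [if_neg hh] at h1; split_ifs at h1 <;> omega
    have ha : a = l := by
      rcases eq_or_ne a l with hh | hh
      · exact hh
      · rw [if_neg hh] at h1; split_ifs at h1 <;> omega
    subst hl' ha
    have hi' : i' = i := by
      rcases eq_or_ne i' i with hh | hh
      · exact hh
      · have h2 := h i'
        rw [if_neg (Ne.symm hil'), if_pos rfl, if_neg (Ne.symm hh)] at h2
        exact absurd h2 (by omega)
    exact ⟨rfl, hi', rfl⟩
  · rintro ⟨rfl, rfl, rfl⟩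
    abel

private lemma key2c (l i l' : Fin n) (hil : i ≠ l) :
    ¬(Finsupp.single l' 1 + U n + U n =
      Finsupp.single l 1 + Finsupp.single l 1 + W i + U n) := by
  intro H
  have h := fun k => congrFun (congrArg (fun f : Fin n →₀ ℕ => (f : Fin n → ℕ)) H) k
  simp only [Finsupp.coe_add, Pi.add_apply, Finsupp.single_apply, W_apply, U_apply] at h
  have h1 := h l
  rw [if_pos rfl, if_neg hil] at h1
  split_ifs at h1 <;> omega

private lemma key3c (l l' : Fin n) :
    (Finsupp.single l' 1 + U n + U n = Finsupp.single l 1 + U n + U n) ↔ l' = l := by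
  constructor
  · intro H
    have h := fun k => congrFun (congrArg (fun f : Fin n →₀ ℕ => (f : Fin n → ℕ)) H) k
    simp only [Finsupp.coe_add, Pi.add_apply, Finsupp.single_apply, W_apply, U_apply] at h
    have h1 := h l
    rw [if_pos rfl] at h1
    rcases eq_or_ne l' l with hh | hh
    · exact hh
    · rw [if_neg hh] at h1; omega
  · rintro rfl; rfl

end Keys

section Forms
variable {K : Type*} [CommSemiring K] {n : ℕ}

private lemma Xdef (a : Fin n) :
    (X a : MvPolynomial (Fin n) K) = monomial (Finsupp.single a 1) 1 := rfl

private lemma prodX (s : Finset (Fin n)) :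
    (∏ j ∈ s, (X j : MvPolynomial (Fin n) K)) = monomial (∑ j ∈ s, Finsupp.single j 1) 1 := by
  induction s using Finset.cons_induction with
  | empty => simp
  | cons a s ha ih => rw [Finset.prod_cons, Finset.sum_cons, ih, Xdef, monomial_mul, one_mul]

private lemma mono3 (w1 w2 w3 : Fin n →₀ ℕ) :
    monomial w1 (1:K) * monomial w2 1 * monomial w3 1 = monomial (w1 + w2 + w3) 1 := by
  simp [monomial_mul]

private lemma coeff_mono_L2 (w m : Fin n →₀ ℕ) :
    coeff m (monomial w (1:K) * ((∑ j : Fin n, X j) * ∑ j : Fin n, X j)) =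
      ∑ a : Fin n, ∑ b : Fin n,
        if w + Finsupp.single a 1 + Finsupp.single b 1 = m then 1 else 0 := by
  rw [Finset.sum_mul_sum]
  simp only [Finset.mul_sum, coeff_sum]
  refine Finset.sum_congr rfl fun a _ => Finset.sum_congr rfl fun b _ => ?_
  rw [show monomial w (1:K) * (X a * X b)
      = monomial (w + Finsupp.single a 1 + Finsupp.single b 1) 1 by
    rw [Xdef, Xdef, monomial_mul, monomial_mul]; rw [one_mul, one_mul, add_assoc]]
  rw [coeff_monomial]

private lemma coeff_mono_L1 (w m : Fin n →₀ ℕ) :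
    coeff m (monomial w (1:K) * ∑ j : Fin n, X j) =
      ∑ a : Fin n, if w + Finsupp.single a 1 = m then 1 else 0 := by
  simp only [Finset.mul_sum, coeff_sum]
  refine Finset.sum_congr rfl fun a _ => ?_
  rw [show monomial w (1:K) * X a = monomial (w + Finsupp.single a 1) 1 by
    rw [Xdef, monomial_mul, one_mul]]
  rw [coeff_monomial]

variable (Δ : Fin (n + 1) → MvPolynomial (Fin n) K)
  (hΔ : ∀ i : Fin (n + 1), Δ i = if h : (i : ℕ) < n
      then (∑ j : Fin n, X j) * ∏ j ∈ Finset.univ.erase (⟨(i : ℕ), h⟩ : Fin n), X j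
      else ∏ j : Fin n, X j)

include hΔ

private lemma formAB (l : Fin n) (i j : Fin (n+1)) (hi : (i:ℕ) < n) (hj : (j:ℕ) < n) :
    X l * (Δ i * Δ j) = monomial (Finsupp.single l 1 + W ⟨(i:ℕ),hi⟩ + W ⟨(j:ℕ),hj⟩) 1 *
      ((∑ j : Fin n, X j) * ∑ j : Fin n, X j) := by
  rw [hΔ i, hΔ j, dif_pos hi, dif_pos hj, prodX, prodX, ← mono3, Xdef]
  show _ = (monomial (Finsupp.single l 1) 1 * monomial (W ⟨(i:ℕ),hi⟩) 1 *
    monomial (W ⟨(j:ℕ),hj⟩) 1) * _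
  rw [W, W]
  ring

private lemma formC (l : Fin n) (i j : Fin (n+1)) (hi : (i:ℕ) < n) (hj : ¬ (j:ℕ) < n) :
    X l * (Δ i * Δ j) = monomial (Finsupp.single l 1 + W ⟨(i:ℕ),hi⟩ + U n) 1 *
      (∑ j : Fin n, X j) := by
  rw [hΔ i, hΔ j, dif_pos hi, dif_neg hj, prodX, prodX, ← mono3, Xdef]
  show _ = (monomial (Finsupp.single l 1) 1 * monomial (W ⟨(i:ℕ),hi⟩) 1 *
    monomial (U n) 1) * _
  rw [W, U]
  ring

private lemma formD (l : Fin n) (i j : Fin (n+1)) (hi : ¬ (i:ℕ) < n) (hj : ¬ (j:ℕ) < n) :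
    X l * (Δ i * Δ j) = monomial (Finsupp.single l 1 + U n + U n) 1 := by
  rw [hΔ i, hΔ j, dif_neg hi, dif_neg hj, prodX, ← mono3, Xdef]
  rw [U]
  ring

end Forms

private lemma sumIte1 {K : Type*} [Semiring K] {n : ℕ} (l : Fin n) :
    (∑ a : Fin n, if a = l then (1:K) else 0) = 1 := by
  rw [Finset.sum_ite_eq' univ l fun _ => (1:K)]; simp

private lemma sumIte2 {K : Type*} [Semiring K] {n : ℕ} (l : Fin n) :
    (∑ a : Fin n, ∑ b : Fin n, if a = l ∧ b = l then (1:K) else 0) = 1 := by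
  have h : ∀ a : Fin n, (∑ b : Fin n, if a = l ∧ b = l then (1:K) else 0)
      = if a = l then 1 else 0 := by
    intro a; by_cases h : a = l
    · simp only [h, true_and]; exact sumIte1 l
    · simp [h]
  rw [Finset.sum_congr rfl fun a _ => h a]; exact sumIte1 l

private abbrev Idx (n : ℕ) := {t : Fin n × Fin (n + 1) × Fin (n + 1) //
    t.2.1 ≤ t.2.2 ∧ (t.2.1 : ℕ) ≠ (t.1 : ℕ) ∧ (t.2.2 : ℕ) ≠ (t.1 : ℕ)}

/-- With notation as before (`n ≥ 3`, variables indexed by `Fin n` where index `l`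
stands for `x_{n+1+l}`, `Δ_i` the Perazzo minors and `δ_{ij} = Δ_iΔ_j`), the collection
`{x_{n+1+l}·δ_{ij} : 0 ≤ l ≤ n-1, i ≤ j, i ≠ l, j ≠ l}` is linearly independent
over `K`. -/
theorem x_mul_deltas_products_linearIndependent
    {K : Type*} [Field K] [CharZero K] {n : ℕ} (hn : 3 ≤ n)
    (Δ : Fin (n + 1) → MvPolynomial (Fin n) K)
    (hΔ : ∀ i : Fin (n + 1), Δ i = if h : (i : ℕ) < n
        then (∑ j : Fin n, X j) * ∏ j ∈ Finset.univ.erase (⟨(i : ℕ), h⟩ : Fin n), X j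
        else ∏ j : Fin n, X j) :
    LinearIndependent K
      (fun t : {t : Fin n × Fin (n + 1) × Fin (n + 1) //
          t.2.1 ≤ t.2.2 ∧ (t.2.1 : ℕ) ≠ (t.1 : ℕ) ∧ (t.2.2 : ℕ) ≠ (t.1 : ℕ)} =>
        X t.1.1 * (Δ t.1.2.1 * Δ t.1.2.2)) := by
  rw [Fintype.linearIndependent_iff]
  intro g hg
  have hco : ∀ m : Fin n →₀ ℕ,
      (∑ t : Idx n, g t * coeff m (X t.1.1 * (Δ t.1.2.1 * Δ t.1.2.2))) = 0 := by
    intro m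
    have h0 := congrArg (coeff m) hg
    rw [coeff_zero, coeff_sum] at h0
    rw [← h0]
    exact Finset.sum_congr rfl fun t _ => by rw [coeff_smul, smul_eq_mul]
  -- Stage 1 : both minors non-degenerate (i ≤ j < n)
  have st1 : ∀ t : Idx n, ((t : Idx n).1.2.2 : ℕ) < n → g t = 0 := by
    rintro ⟨⟨l, i, j⟩, hle, hil, hjl⟩ hjn
    have hin : (i : ℕ) < n := lt_of_le_of_lt (Fin.le_def.mp hle) hjn
    have hILn : (⟨(i:ℕ), hin⟩ : Fin n) ≠ l := Fin.ne_of_val_ne hil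
    have hJLn : (⟨(j:ℕ), hjn⟩ : Fin n) ≠ l := Fin.ne_of_val_ne hjl
    have hIJ : ((⟨(i:ℕ), hin⟩ : Fin n) : ℕ) ≤ ((⟨(j:ℕ), hjn⟩ : Fin n) : ℕ) := Fin.le_def.mp hle
    have hm := hco (Finsupp.single l 1 + Finsupp.single l 1 + Finsupp.single l 1 +
      W ⟨(i:ℕ), hin⟩ + W ⟨(j:ℕ), hjn⟩)
    rw [Finset.sum_eq_single (⟨(l, i, j), hle, hil, hjl⟩ : Idx n)] at hm
    · rw [formAB Δ hΔ l i j hin hjn, coeff_mono_L2] at hm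
      have hs : (∑ a : Fin n, ∑ b : Fin n,
          if Finsupp.single l 1 + W ⟨(i:ℕ),hin⟩ + W ⟨(j:ℕ),hjn⟩ +
              Finsupp.single a 1 + Finsupp.single b 1
            = Finsupp.single l 1 + Finsupp.single l 1 + Finsupp.single l 1 +
              W ⟨(i:ℕ),hin⟩ + W ⟨(j:ℕ),hjn⟩
          then (1:K) else 0) = 1 := by
        rw [Finset.sum_congr rfl fun a _ => Finset.sum_congr rfl fun b _ =>
          if_congr (Iff.intro
            (fun h => ((key1a l _ _ l _ _ a b hIJ hILn hJLn hIJ hILn hJLn).mp h).2.2.2)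
            (fun h => (key1a l _ _ l _ _ a b hIJ hILn hJLn hIJ hILn hJLn).mpr
              ⟨rfl, rfl, rfl, h.1, h.2⟩)) rfl rfl]
        exact sumIte2 l
      rw [hs, mul_one] at hm
      exact hm
    · rintro ⟨⟨l', i', j'⟩, hle', hil', hjl'⟩ - hne
      by_cases hj'n : (j' : ℕ) < n
      · have hi'n : (i' : ℕ) < n := lt_of_le_of_lt (Fin.le_def.mp hle') hj'n
        rw [formAB Δ hΔ l' i' j' hi'n hj'n, coeff_mono_L2]
        refine mul_eq_zero_of_right _
          (Finset.sum_eq_zero fun a _ => Finset.sum_eq_zero fun b _ => ?_)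
        rw [if_neg]
        intro hcond
        obtain ⟨hl0, hi0, hj0, -, -⟩ := (key1a l _ _ l' _ _ a b hIJ hILn hJLn
          (Fin.le_def.mp hle') (Fin.ne_of_val_ne hil') (Fin.ne_of_val_ne hjl')).mp hcond
        rw [Fin.mk.injEq] at hi0 hj0
        have hi1 : i' = i := Fin.ext hi0
        have hj1 : j' = j := Fin.ext hj0
        exact hne (Subtype.ext (show (l', i', j') = (l, i, j) by rw [hl0, hi1, hj1]))
      · by_cases hi'n : (i' : ℕ) < n
        · rw [formC Δ hΔ l' i' j' hi'n hj'n, coeff_mono_L1]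
          refine mul_eq_zero_of_right _ (Finset.sum_eq_zero fun a _ => ?_)
          rw [if_neg (key1b l _ _ l' _ a hILn hJLn)]
        · rw [formD Δ hΔ l' i' j' hi'n hj'n, coeff_monomial,
            if_neg (key1c l _ _ l' hILn hJLn), mul_zero]
    · intro hnot; exact absurd (Finset.mem_univ _) hnot
  -- Stage 2 : i < n, j = n
  have st2 : ∀ t : Idx n, ((t : Idx n).1.2.1 : ℕ) < n → ¬ ((t : Idx n).1.2.2 : ℕ) < n →
      g t = 0 := by
    rintro ⟨⟨l, i, j⟩, hle, hil, hjl⟩ hin hjn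
    replace hin : (i : ℕ) < n := hin
    replace hjn : ¬ (j : ℕ) < n := hjn
    have hILn : (⟨(i:ℕ), hin⟩ : Fin n) ≠ l := Fin.ne_of_val_ne hil
    have hm := hco (Finsupp.single l 1 + Finsupp.single l 1 + W ⟨(i:ℕ), hin⟩ + U n)
    rw [Finset.sum_eq_single (⟨(l, i, j), hle, hil, hjl⟩ : Idx n)] at hm
    · rw [formC Δ hΔ l i j hin hjn, coeff_mono_L1] at hm
      have hs : (∑ a : Fin n,
          if Finsupp.single l 1 + W ⟨(i:ℕ),hin⟩ + U n + Finsupp.single a 1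
            = Finsupp.single l 1 + Finsupp.single l 1 + W ⟨(i:ℕ),hin⟩ + U n
          then (1:K) else 0) = 1 := by
        rw [Finset.sum_congr rfl fun a _ =>
          if_congr (Iff.intro
            (fun h => ((key2b l _ l _ a hILn hILn).mp h).2.2)
            (fun h => (key2b l _ l _ a hILn hILn).mpr ⟨rfl, rfl, h⟩)) rfl rfl]
        exact sumIte1 l
      rw [hs, mul_one] at hm
      exact hm
    · rintro ⟨⟨l', i', j'⟩, hle', hil', hjl'⟩ - hne
      by_cases hj'n : (j' : ℕ) < n
      · exact mul_eq_zero_of_left (st1 _ hj'n) _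
      · by_cases hi'n : (i' : ℕ) < n
        · rw [formC Δ hΔ l' i' j' hi'n hj'n, coeff_mono_L1]
          refine mul_eq_zero_of_right _ (Finset.sum_eq_zero fun a _ => ?_)
          rw [if_neg]
          intro hcond
          obtain ⟨hl0, hi0, -⟩ := (key2b l _ l' _ a hILn (Fin.ne_of_val_ne hil')).mp hcond
          rw [Fin.mk.injEq] at hi0
          have hi1 : i' = i := Fin.ext hi0
          have hj1 : j' = j := Fin.ext (by have := j.isLt; have := j'.isLt; omega)
          exact hne (Subtype.ext (show (l', i', j') = (l, i, j) by rw [hl0, hi1, hj1]))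
        · rw [formD Δ hΔ l' i' j' hi'n hj'n, coeff_monomial,
            if_neg (key2c l _ l' hILn), mul_zero]
    · intro hnot; exact absurd (Finset.mem_univ _) hnot
  -- Stage 3 : i = j = n
  have st3 : ∀ t : Idx n, ¬ ((t : Idx n).1.2.1 : ℕ) < n → g t = 0 := by
    rintro ⟨⟨l, i, j⟩, hle, hil, hjl⟩ hin
    replace hin : ¬ (i : ℕ) < n := hin
    have hjn : ¬ ((j : ℕ) < n) := fun h => hin (lt_of_le_of_lt (Fin.le_def.mp hle) h)
    have hm := hco (Finsupp.single l 1 + U n + U n)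
    rw [Finset.sum_eq_single (⟨(l, i, j), hle, hil, hjl⟩ : Idx n)] at hm
    · rw [formD Δ hΔ l i j hin hjn, coeff_monomial, if_pos ((key3c l l).mpr rfl),
        mul_one] at hm
      exact hm
    · rintro ⟨⟨l', i', j'⟩, hle', hil', hjl'⟩ - hne
      by_cases hj'n : (j' : ℕ) < n
      · exact mul_eq_zero_of_left (st1 _ hj'n) _
      · by_cases hi'n : (i' : ℕ) < n
        · exact mul_eq_zero_of_left (st2 _ hi'n hj'n) _
        · rw [formD Δ hΔ l' i' j' hi'n hj'n, coeff_monomial]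
          rw [if_neg, mul_zero]
          intro hcond
          have hl0 : l' = l := (key3c l l').mp hcond
          have hi1 : i' = i := Fin.ext (by have := i.isLt; have := i'.isLt; omega)
          have hj1 : j' = j := Fin.ext (by have := j.isLt; have := j'.isLt; omega)
          exact hne (Subtype.ext (show (l', i', j') = (l, i, j) by rw [hl0, hi1, hj1]))
    · intro hnot; exact absurd (Finset.mem_univ _) hnot
  intro t
  by_cases hj : ((t : Idx n).1.2.2 : ℕ) < n
  · exact st1 t hj
  · by_cases hi : ((t : Idx n).1.2.1 : ℕ) < n
    · exact st2 t hi hj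
    · exact st3 t hi
end
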